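/- If every vertex reachable from x₀ in the extended game has a nonempty set Λ*(v) of λ*-consistent plays, then every play ρ⁰ ∈ Λ*(x₀) is the outcome of some subgame perfect equilibrium of (X, x₀). The SPE is built by, after each deviation at a vertex v to a successor v', following a play ρ_{i,v'} ∈ Λ*(v') maximizing Cost_i over Λ*(v'), where i is the deviating player. -/

import Mathlib

/-!
The equilibrium keeps a current plan, initially `ρ⁰`. When a move from `v` to `w` leaves the
plan, the new plan is a play of `Λ*(w)` maximising the cost of the owner `i` of `v`; it exists
because `Λ*(w)` is a closed, hence compact, set of sequences over a finite alphabet and the cost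
is upper semicontinuous. Every plan in force is `λ*`-consistent, so following it costs `i` at most
`λ*(v) ≤ 1 + max {Cost_i ρ | ρ ∈ Λ*(w)}`, the cost of deviating to `w` when the punishment is then
followed. Induction on the (finite) cost of a deviating outcome extends this one-step comparison
to arbitrary deviations.
-/

open scoped Classical

namespace SPE

variable {V : Type*} {P : Type*}

/-- Vertices of the extended game: a base vertex together with the set of players
having already visited their target set. -/
abbrev XV (V P : Type*) := V × Set P

/-- Edges of the extended game induced by base edges `E` and target sets `F`. -/
def XEdge (E : V → V → Prop) (F : P → Set V) (a b : XV V P) : Prop :=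
  E a.1 b.1 ∧ b.2 = a.2 ∪ {i | b.1 ∈ F i}

/-- Plays of the extended game starting at `x`. -/
def IsPlay (E : V → V → Prop) (F : P → Set V) (x : XV V P) (ρ : ℕ → XV V P) : Prop :=
  ρ 0 = x ∧ ∀ k, XEdge E F (ρ k) (ρ (k + 1))

/-- Cost of player `i` along the suffix `ρ_{≥ n}`: the least `k` such that `i` belongs to
the second component of `ρ (n + k)`, and `⊤` if there is no such `k`. -/
noncomputable def costFrom (ρ : ℕ → XV V P) (n : ℕ) (i : P) : ℕ∞ :=
  sInf ((fun k : ℕ => (k : ℕ∞)) '' {k | i ∈ (ρ (n + k)).2})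

/-- Cost of player `i` along the play `ρ` of the extended game. -/
noncomputable def cost (ρ : ℕ → XV V P) (i : P) : ℕ∞ := costFrom ρ 0 i

/-- `λ`-consistency of a play. -/
def Consistent (own : V → P) (lam : XV V P → ℕ∞) (ρ : ℕ → XV V P) : Prop :=
  ∀ n, costFrom ρ n (own (ρ n).1) ≤ lam (ρ n)

/-- The set `Λ(x)` of `λ`-consistent plays from `x`. -/
def Lam (E : V → V → Prop) (F : P → Set V) (own : V → P) (lam : XV V P → ℕ∞)
    (x : XV V P) : Set (ℕ → XV V P) :=
  {ρ | IsPlay E F x ρ ∧ Consistent own lam ρ}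

/-- The initial labeling `λ⁰`. -/
noncomputable def lam0 (own : V → P) : XV V P → ℕ∞ :=
  fun v => if own v.1 ∈ v.2 then 0 else ⊤

/-- The labeling update operator. -/
noncomputable def update (E : V → V → Prop) (F : P → Set V) (own : V → P)
    (lam : XV V P → ℕ∞) (v : XV V P) : ℕ∞ :=
  if own v.1 ∈ v.2 then 0
  else ⨅ w ∈ {w : XV V P | XEdge E F v w},
    (1 + sSup ((fun ρ => cost ρ (own v.1)) '' Lam E F own lam w))

/-- Prepend a finite list in front of an infinite sequence. -/
def listAppendSeq {α : Type*} (h : List α) (ρ : ℕ → α) : ℕ → α :=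
  fun k => if hk : k < h.length then h.get ⟨k, hk⟩ else ρ (k - h.length)

/-- Validity of a strategy profile in the extended game: the prescribed moves follow edges. -/
def StratValid (E : V → V → Prop) (F : P → Set V)
    (σ : List (XV V P) → XV V P → XV V P) : Prop :=
  ∀ h v, XEdge E F v (σ h v)

/-- The outcome of a strategy profile after history `h` from vertex `v`. -/
def outcome (σ : List (XV V P) → XV V P → XV V P) :
    List (XV V P) → XV V P → ℕ → XV V P
  | _, v, 0 => v
  | h, v, n + 1 => outcome σ (h ++ [v]) (σ h v) n

/-- `h·v` is a history of the initialized extended game `(X, x0)`. -/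
def IsHistoryFrom (E : V → V → Prop) (F : P → Set V) (x0 : XV V P)
    (h : List (XV V P)) (v : XV V P) : Prop :=
  (h ++ [v]).head? = some x0 ∧ (h ++ [v]).Chain' (XEdge E F)

/-- Cost of player `i` of the play `h·ρ` (cost in the subgame after `h`). -/
noncomputable def costAfter (h : List (XV V P)) (ρ : ℕ → XV V P) (i : P) : ℕ∞ :=
  sInf ((fun k : ℕ => (k : ℕ∞)) '' {k | i ∈ (listAppendSeq h ρ k).2})

/-- `τ` is a unilateral deviation of player `i` from the profile `σ`. -/
def Deviation (own : V → P) (σ τ : List (XV V P) → XV V P → XV V P) (i : P) : Prop :=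
  ∀ h v, own v.1 ≠ i → τ h v = σ h v

/-- Subgame perfect equilibrium of the initialized extended game. -/
def IsSPE (E : V → V → Prop) (F : P → Set V) (own : V → P) (x0 : XV V P)
    (σ : List (XV V P) → XV V P → XV V P) : Prop :=
  StratValid E F σ ∧
  ∀ h v, IsHistoryFrom E F x0 h v → ∀ (i : P) τ, StratValid E F τ →
    Deviation own σ τ i →
    costAfter h (outcome σ h v) i ≤ costAfter h (outcome τ h v) i

theorem costFrom_le_natCast_iff {ρ : ℕ → XV V P} {n m : ℕ} {i : P} :
    costFrom ρ n i ≤ m ↔ ∃ k ≤ m, i ∈ (ρ (n + k)).2 := by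
  constructor
  · intro h
    have hS : {k | i ∈ (ρ (n + k)).2}.Nonempty := by
      by_contra hS
      simp [costFrom, Set.not_nonempty_iff_eq_empty.1 hS] at h
    obtain ⟨k, hk, hkeq⟩ := csInf_mem (hS.image ((↑) : ℕ → ℕ∞))
    rw [costFrom, ← hkeq] at h
    exact ⟨k, by exact_mod_cast h, hk⟩
  · rintro ⟨k, hkm, hk⟩
    exact (sInf_le (Set.mem_image_of_mem Nat.cast hk)).trans (Nat.cast_le.2 hkm)

theorem cost_eq_zero {ρ : ℕ → XV V P} {i : P} (h : i ∈ (ρ 0).2) : cost ρ i = 0 :=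
  nonpos_iff_eq_zero.1 <| costFrom_le_natCast_iff.2 ⟨0, le_rfl, h⟩

theorem costFrom_tail (ρ : ℕ → XV V P) (n : ℕ) (i : P) :
    costFrom (fun k => ρ (k + 1)) n i = costFrom ρ (n + 1) i := by
  simp only [costFrom, Nat.add_right_comm n _ 1]

theorem cost_eq_one_add_cost_tail {ρ : ℕ → XV V P} {i : P} (h : i ∉ (ρ 0).2) :
    cost ρ i = 1 + cost (fun k => ρ (k + 1)) i := by
  simp only [cost, costFrom, sInf_image, zero_add]
  rw [← inf_iInf_nat_succ]
  simp [h, ENat.add_iInf, add_comm]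

theorem costAfter_mono {h : List (XV V P)} {ρ ρ' : ℕ → XV V P} {i : P}
    (hc : cost ρ i ≤ cost ρ' i) : costAfter h ρ i ≤ costAfter h ρ' i := by
  refine le_sInf ?_
  rintro _ ⟨k, hk, rfl⟩
  by_cases hlt : k < h.length
  · exact sInf_le (Set.mem_image_of_mem _ (by simpa [listAppendSeq, hlt] using hk))
  · have hk' : i ∈ (ρ' (0 + (k - h.length))).2 := by simpa [listAppendSeq, hlt] using hk
    obtain ⟨j, hj, hij⟩ :=
      costFrom_le_natCast_iff.1 (hc.trans (costFrom_le_natCast_iff.2 ⟨_, le_rfl, hk'⟩))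
    have hmem : h.length + j ∈ {k | i ∈ (listAppendSeq h ρ k).2} := by
      simpa [listAppendSeq] using hij
    exact (sInf_le (Set.mem_image_of_mem _ hmem)).trans (Nat.cast_le.2 (by omega))

section Topology

variable [TopologicalSpace (XV V P)] [DiscreteTopology (XV V P)]

theorem isClosed_setOf_costFrom_le (n : ℕ) (i : P) (c : ℕ∞) :
    IsClosed {ρ : ℕ → XV V P | costFrom ρ n i ≤ c} := by
  induction c using ENat.recTopCoe with
  | top => simp
  | coe m =>
    have : {ρ : ℕ → XV V P | costFrom ρ n i ≤ m} =
        ⋃ k ∈ Set.Iic m, (fun ρ => ρ (n + k)) ⁻¹' {x | i ∈ x.2} := by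
      ext ρ
      simp [costFrom_le_natCast_iff]
    rw [this]
    exact (Set.finite_Iic m).isClosed_biUnion fun k _ =>
      (isClosed_discrete _).preimage (continuous_apply _)

theorem isClosed_Lam (E : V → V → Prop) (F : P → Set V) (own : V → P) (lam : XV V P → ℕ∞)
    (x : XV V P) : IsClosed (Lam E F own lam x) := by
  have hstart : IsClosed {ρ : ℕ → XV V P | ρ 0 = x} :=
    isClosed_eq (continuous_apply 0) continuous_const
  have hedges : IsClosed {ρ : ℕ → XV V P | ∀ k, XEdge E F (ρ k) (ρ (k + 1))} := by
    simp only [Set.ofPred_forall]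
    exact isClosed_iInter fun k =>
      (isClosed_discrete {p : XV V P × XV V P | XEdge E F p.1 p.2}).preimage
        (f := fun ρ : ℕ → XV V P => (ρ k, ρ (k + 1))) (by fun_prop)
  have hconsistent : IsClosed {ρ | Consistent own lam ρ} := by
    have : {ρ | Consistent own lam ρ} =
        ⋂ (n : ℕ) (x : XV V P), {ρ | ρ n = x → costFrom ρ n (own x.1) ≤ lam x} := by
      ext ρ
      simp [Consistent]
    rw [this]
    exact isClosed_iInter fun n => isClosed_iInter fun x =>
      isClosed_imp ((isOpen_discrete {x}).preimage (continuous_apply (A := fun _ => XV V P) n))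
        (isClosed_setOf_costFrom_le n _ _)
  exact (hstart.inter hedges).inter hconsistent

theorem upperSemicontinuous_cost (i : P) :
    UpperSemicontinuous (fun ρ : ℕ → XV V P => cost ρ i) := by
  intro ρ y hy
  obtain ⟨_, ⟨k, hk, rfl⟩, hky⟩ := sInf_lt_iff.1 hy
  filter_upwards [(continuous_apply k).continuousAt.preimage_mem_nhds
    ((isOpen_discrete {ρ k}).mem_nhds rfl)] with ρ' hρ'
  have hk' : i ∈ (ρ' (0 + k)).2 := by simpa [show ρ' k = ρ k from hρ'] using hk
  exact (costFrom_le_natCast_iff.2 ⟨k, le_rfl, hk'⟩).trans_lt hky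

end Topology

theorem exists_isMaxOn_cost [Finite V] [Finite P] {E : V → V → Prop} {F : P → Set V}
    {own : V → P} {lam : XV V P → ℕ∞} {w : XV V P} (hw : (Lam E F own lam w).Nonempty) (i : P) :
    ∃ ρ ∈ Lam E F own lam w, IsMaxOn (fun ρ => cost ρ i) (Lam E F own lam w) ρ := by
  let _ : TopologicalSpace (XV V P) := ⊥
  have : DiscreteTopology (XV V P) := ⟨rfl⟩
  exact ((upperSemicontinuous_cost i).upperSemicontinuousOn _).exists_isMaxOn hw
    (isClosed_Lam E F own lam w).isCompact

section Plays

variable {E : V → V → Prop} {F : P → Set V} {own : V → P} {lam : XV V P → ℕ∞}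

theorem IsPlay.tail {x : XV V P} {ρ : ℕ → XV V P} (h : IsPlay E F x ρ) :
    IsPlay E F (ρ 1) (fun k => ρ (k + 1)) :=
  ⟨rfl, fun k => h.2 (k + 1)⟩

theorem Consistent.tail {ρ : ℕ → XV V P} (h : Consistent own lam ρ) :
    Consistent own lam (fun k => ρ (k + 1)) := fun n => by
  simpa only [costFrom_tail] using h (n + 1)

theorem tail_mem_Lam {x : XV V P} {ρ : ℕ → XV V P} (h : ρ ∈ Lam E F own lam x) :
    (fun k => ρ (k + 1)) ∈ Lam E F own lam (ρ 1) :=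
  ⟨h.1.tail, h.2.tail⟩

theorem cost_le_one_add_sSup_cost {v w : XV V P} {ρ : ℕ → XV V P}
    (hv : lam v = update E F own lam v) (hρ : ρ ∈ Lam E F own lam v) (hown : own v.1 ∉ v.2)
    (hw : XEdge E F v w) :
    cost ρ (own v.1) ≤ 1 + sSup ((fun ρ' => cost ρ' (own v.1)) '' Lam E F own lam w) := by
  have hρv : cost ρ (own v.1) ≤ lam v := by
    have h0 := hρ.2 0
    rwa [hρ.1.1] at h0
  rw [hv, update, if_neg hown] at hρv
  exact hρv.trans (iInf₂_le w hw)

theorem isHistoryFrom_iff {x0 v : XV V P} {h : List (XV V P)} :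
    IsHistoryFrom E F x0 h v ↔ (h ++ [v]).head? = some x0 ∧ (h ++ [v]).IsChain (XEdge E F) :=
  Iff.rfl

theorem isHistoryFrom_nil {x0 v : XV V P} : IsHistoryFrom E F x0 [] v ↔ v = x0 := by
  simp [isHistoryFrom_iff]

theorem isHistoryFrom_append_singleton {x0 u v : XV V P} {h : List (XV V P)} :
    IsHistoryFrom E F x0 (h ++ [u]) v ↔ IsHistoryFrom E F x0 h u ∧ XEdge E F u v := by
  simp [isHistoryFrom_iff, List.isChain_append]
  tauto

theorem IsHistoryFrom.reflTransGen {x0 v : XV V P} {h : List (XV V P)}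
    (hist : IsHistoryFrom E F x0 h v) : Relation.ReflTransGen (XEdge E F) x0 v := by
  induction h using List.reverseRecOn generalizing v with
  | nil => exact isHistoryFrom_nil.1 hist ▸ .refl
  | append_singleton h u ih =>
    obtain ⟨hu, huv⟩ := isHistoryFrom_append_singleton.1 hist
    exact (ih hu).tail huv

theorem cost_outcome_of_notMem (σ : List (XV V P) → XV V P → XV V P) (h : List (XV V P))
    {v : XV V P} {i : P} (hi : i ∉ v.2) :
    cost (outcome σ h v) i = 1 + cost (outcome σ (h ++ [v]) (σ h v)) i :=
  cost_eq_one_add_cost_tail hi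

end Plays

section Strategy

variable (E : V → V → Prop) (F : P → Set V) (own : V → P) (lam : XV V P → ℕ∞)

noncomputable def punish (i : P) (w : XV V P) : ℕ → XV V P :=
  if h : ∃ ρ ∈ Lam E F own lam w, IsMaxOn (fun ρ => cost ρ i) (Lam E F own lam w) ρ then
    h.choose
  else fun _ => w

noncomputable def replan (p : ℕ → XV V P) (w : XV V P) : ℕ → XV V P :=
  if w = p 1 then fun k => p (k + 1) else punish E F own lam (own (p 0).1) w

-- A history `x0 :: moves` acts on the plan only through its moves.
noncomputable def plan (ρ0 : ℕ → XV V P) (l : List (XV V P)) : ℕ → XV V P :=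
  l.tail.foldl (replan E F own lam) ρ0

noncomputable def planStrategy (htot : ∀ u : V, ∃ w, E u w) (ρ0 : ℕ → XV V P)
    (h : List (XV V P)) (v : XV V P) : XV V P :=
  if XEdge E F v (plan E F own lam ρ0 (h ++ [v]) 1) then plan E F own lam ρ0 (h ++ [v]) 1
  else ((htot v.1).choose, v.2 ∪ {i | (htot v.1).choose ∈ F i})

variable {E F own lam}

theorem punish_spec [Finite V] [Finite P] {w : XV V P} (hw : (Lam E F own lam w).Nonempty)
    (i : P) : punish E F own lam i w ∈ Lam E F own lam w ∧
      IsMaxOn (fun ρ => cost ρ i) (Lam E F own lam w) (punish E F own lam i w) := by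
  have hex := exists_isMaxOn_cost hw i
  rw [punish, dif_pos hex]
  exact hex.choose_spec

theorem plan_append_singleton (ρ0 : ℕ → XV V P) {l : List (XV V P)} (hl : l ≠ []) (w : XV V P) :
    plan E F own lam ρ0 (l ++ [w]) = replan E F own lam (plan E F own lam ρ0 l) w := by
  rw [plan, List.tail_append_of_ne_nil hl, List.foldl_concat, plan]

theorem plan_mem_Lam [Finite V] [Finite P] {x0 : XV V P} {ρ0 : ℕ → XV V P}
    (hρ0 : ρ0 ∈ Lam E F own lam x0)
    (hne : ∀ v, Relation.ReflTransGen (XEdge E F) x0 v → (Lam E F own lam v).Nonempty)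
    {h : List (XV V P)} {v : XV V P} (hist : IsHistoryFrom E F x0 h v) :
    plan E F own lam ρ0 (h ++ [v]) ∈ Lam E F own lam v := by
  induction h using List.reverseRecOn generalizing v with
  | nil => exact isHistoryFrom_nil.1 hist ▸ hρ0
  | append_singleton h u ih =>
    rw [plan_append_singleton _ (by simp), replan]
    split_ifs with hv
    · exact hv ▸ tail_mem_Lam (ih (isHistoryFrom_append_singleton.1 hist).1)
    · exact (punish_spec (hne v hist.reflTransGen) _).1

theorem planStrategy_stratValid (htot : ∀ u : V, ∃ w, E u w) (ρ0 : ℕ → XV V P) :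
    StratValid E F (planStrategy E F own lam htot ρ0) := by
  intro h v
  rw [planStrategy]
  split_ifs with hedge
  · exact hedge
  · exact ⟨(htot v.1).choose_spec, rfl⟩

theorem planStrategy_eq (htot : ∀ u : V, ∃ w, E u w) {ρ0 : ℕ → XV V P} {h : List (XV V P)}
    {v : XV V P} (hp : IsPlay E F v (plan E F own lam ρ0 (h ++ [v]))) :
    planStrategy E F own lam htot ρ0 h v = plan E F own lam ρ0 (h ++ [v]) 1 := by
  rw [planStrategy, if_pos]
  simpa only [hp.1] using hp.2 0

theorem outcome_planStrategy (htot : ∀ u : V, ∃ w, E u w) {ρ0 : ℕ → XV V P}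
    {h : List (XV V P)} {v : XV V P} (hp : IsPlay E F v (plan E F own lam ρ0 (h ++ [v]))) :
    outcome (planStrategy E F own lam htot ρ0) h v = plan E F own lam ρ0 (h ++ [v]) := by
  funext k
  induction k generalizing h v with
  | zero => exact hp.1.symm
  | succ k ih =>
    have hnext : plan E F own lam ρ0 (h ++ [v] ++ [planStrategy E F own lam htot ρ0 h v]) =
        fun k => plan E F own lam ρ0 (h ++ [v]) (k + 1) := by
      rw [plan_append_singleton _ (by simp), replan, if_pos (planStrategy_eq htot hp)]
    have hp' : IsPlay E F (planStrategy E F own lam htot ρ0 h v)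
        (plan E F own lam ρ0 (h ++ [v] ++ [planStrategy E F own lam htot ρ0 h v])) := by
      rw [hnext, planStrategy_eq htot hp]
      exact hp.tail
    exact (ih hp').trans (congrFun hnext k)

theorem outcome_planStrategy_after_deviation [Finite V] [Finite P]
    (htot : ∀ u : V, ∃ w, E u w) {x0 : XV V P} {ρ0 : ℕ → XV V P}
    (hρ0 : ρ0 ∈ Lam E F own lam x0)
    (hne : ∀ v, Relation.ReflTransGen (XEdge E F) x0 v → (Lam E F own lam v).Nonempty)
    {h : List (XV V P)} {v w : XV V P} (hist : IsHistoryFrom E F x0 h v) (hvw : XEdge E F v w)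
    (hdev : w ≠ planStrategy E F own lam htot ρ0 h v) :
    outcome (planStrategy E F own lam htot ρ0) (h ++ [v]) w = punish E F own lam (own v.1) w := by
  have hp := plan_mem_Lam hρ0 hne hist
  have hw := plan_mem_Lam hρ0 hne (isHistoryFrom_append_singleton.2 ⟨hist, hvw⟩)
  have hplan : plan E F own lam ρ0 (h ++ [v] ++ [w]) = punish E F own lam (own v.1) w := by
    rw [plan_append_singleton _ (by simp), replan, if_neg (planStrategy_eq htot hp.1 ▸ hdev),
      hp.1.1]
  rw [outcome_planStrategy htot hw.1, hplan]

theorem cost_outcome_planStrategy_le_of_le [Finite V] [Finite P]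
    (htot : ∀ u : V, ∃ w, E u w) {x0 : XV V P} {ρ0 : ℕ → XV V P}
    (hfix : ∀ w, lam w = update E F own lam w) (hρ0 : ρ0 ∈ Lam E F own lam x0)
    (hne : ∀ v, Relation.ReflTransGen (XEdge E F) x0 v → (Lam E F own lam v).Nonempty)
    {i : P} {τ : List (XV V P) → XV V P → XV V P} (hτ : StratValid E F τ)
    (hdev : Deviation own (planStrategy E F own lam htot ρ0) τ i) (K : ℕ)
    {h : List (XV V P)} {v : XV V P} (hist : IsHistoryFrom E F x0 h v)
    (hK : cost (outcome τ h v) i ≤ K) :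
    cost (outcome (planStrategy E F own lam htot ρ0) h v) i ≤ cost (outcome τ h v) i := by
  set σ := planStrategy E F own lam htot ρ0
  induction K generalizing h v with
  | zero =>
    have hiv : i ∈ v.2 := by simpa [outcome] using costFrom_le_natCast_iff.1 hK
    exact (cost_eq_zero hiv).trans_le zero_le
  | succ K ih =>
    by_cases hiv : i ∈ v.2
    · exact (cost_eq_zero hiv).trans_le zero_le
    have hw := isHistoryFrom_append_singleton.2 ⟨hist, hτ h v⟩
    rw [cost_outcome_of_notMem τ h hiv] at hK ⊢
    rw [Nat.cast_succ, add_comm] at hK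
    have ih' := ih hw ((ENat.add_le_add_iff_right ENat.one_ne_top).1 hK)
    by_cases hsame : τ h v = σ h v
    · rw [cost_outcome_of_notMem σ h hiv, ← hsame]
      exact add_le_add_right ih' 1
    have hown : own v.1 = i := by
      by_contra hni
      exact hsame (hdev h v hni)
    have hp := plan_mem_Lam hρ0 hne hist
    have hmax := (punish_spec (hne _ hw.reflTransGen) i).2
    calc cost (outcome σ h v) i = cost (plan E F own lam ρ0 (h ++ [v])) i := by
          rw [outcome_planStrategy htot hp.1]
      _ ≤ 1 + sSup ((fun ρ => cost ρ i) '' Lam E F own lam (τ h v)) :=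
          hown ▸ cost_le_one_add_sSup_cost (hfix v) hp (hown ▸ hiv) (hτ h v)
      _ ≤ 1 + cost (punish E F own lam i (τ h v)) i := by
          gcongr
          exact sSup_le (Set.forall_mem_image.2 fun ρ hρ => hmax hρ)
      _ = 1 + cost (outcome σ (h ++ [v]) (τ h v)) i := by
          rw [outcome_planStrategy_after_deviation htot hρ0 hne hist (hτ h v) hsame, hown]
      _ ≤ 1 + cost (outcome τ (h ++ [v]) (τ h v)) i := add_le_add_right ih' 1

theorem cost_outcome_planStrategy_le [Finite V] [Finite P]
    (htot : ∀ u : V, ∃ w, E u w) {x0 : XV V P} {ρ0 : ℕ → XV V P}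
    (hfix : ∀ w, lam w = update E F own lam w) (hρ0 : ρ0 ∈ Lam E F own lam x0)
    (hne : ∀ v, Relation.ReflTransGen (XEdge E F) x0 v → (Lam E F own lam v).Nonempty)
    {i : P} {τ : List (XV V P) → XV V P → XV V P} (hτ : StratValid E F τ)
    (hdev : Deviation own (planStrategy E F own lam htot ρ0) τ i)
    {h : List (XV V P)} {v : XV V P} (hist : IsHistoryFrom E F x0 h v) :
    cost (outcome (planStrategy E F own lam htot ρ0) h v) i ≤ cost (outcome τ h v) i := by
  by_cases htop : cost (outcome τ h v) i = ⊤
  · exact htop ▸ le_top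
  obtain ⟨K, hK⟩ := ENat.ne_top_iff_exists.1 htop
  exact cost_outcome_planStrategy_le_of_le htot hfix hρ0 hne hτ hdev K hist hK.ge

end Strategy

/-- if every vertex reachable from `x₀` has a nonempty set `Λ*(v)` of
`λ*`-consistent plays, then every play in `Λ*(x₀)` is the outcome of some SPE of
`(X, x₀)`, where `λ*` satisfies the fixpoint equation. -/
theorem stmt9 {V P : Type*} [Fintype V] [Fintype P]
    (E : V → V → Prop) (F : P → Set V) (own : V → P) (x0 : XV V P)
    (htot : ∀ u : V, ∃ w, E u w)
    (lam : XV V P → ℕ∞)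
    (hfix : ∀ w, lam w = update E F own lam w)
    (hne : ∀ v, Relation.ReflTransGen (XEdge E F) x0 v → (Lam E F own lam v).Nonempty)
    (ρ0 : ℕ → XV V P) (hρ0 : ρ0 ∈ Lam E F own lam x0) :
    ∃ σ, IsSPE E F own x0 σ ∧ ∀ n, outcome σ [] x0 n = ρ0 n := by
  refine ⟨planStrategy E F own lam htot ρ0, ⟨planStrategy_stratValid htot ρ0, ?_⟩, fun n => ?_⟩
  · intro h v hist i τ hτ hdev
    exact costAfter_mono (cost_outcome_planStrategy_le htot hfix hρ0 hne hτ hdev hist)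
  · have hist0 : IsHistoryFrom E F x0 [] x0 := isHistoryFrom_nil.2 rfl
    rw [outcome_planStrategy htot (plan_mem_Lam hρ0 hne hist0).1]
    rfl

end SPE
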